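/- arXiv:1908.06128 — 5 statements merged into one kernel-verified Lean document; each statement's English description precedes it below -/
import Mathlib

section
/- Let q, r ∈ [1,∞) and α ∈ (0,1) satisfy α·(1/q + 1 − 1/r) = 1/q. Then there exists C ∈ (0,∞) such that for every u ∈ W_0^{1,r}((0,1),ℝ) with weak derivative g (i.e. u(x) = ∫_0^x g(t) dt for all x ∈ [0,1], u(1) = 0, g ∈ L^r((0,1),ℝ)) one has sup_{x∈[0,1]} |u(x)| ≤ C·(‖u‖_{L^r((0,1))} + ‖g‖_{L^r((0,1))})^α · ‖u‖_{L^q((0,1))}^{1−α}. -/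
/-!
Fix `x` and a scale `δ ∈ (0, 1]`, and take an interval of length `δ` in `[0, 1]` containing `x`.
Somewhere on it `|u| ≤ δ^(-1/q) ‖u‖_q` (compare `|u|^q` with its minimum), and by Hölder `u`
oscillates there by at most `δ^(1 - 1/r) ‖g‖_r`. Balancing the two terms,
`δ = (‖u‖_q / ‖g‖_r)^(1/(1/q + 1 - 1/r))`, gives `|u x| ≤ 2 ‖g‖_r^α ‖u‖_q^(1-α)`; when this `δ`
would exceed `1`, the cruder bound `|u x| ≤ ‖g‖_r` coming from `u 0 = 0` suffices.
-/

open MeasureTheory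
open Set Filter Topology

theorem setIntegral_abs_le_measureReal_rpow_mul {X : Type*} [MeasurableSpace X] {μ : Measure X}
    {g : X → ℝ} {r : ℝ} (hr : 1 < r) {s t : Set X} (hμs : μ s ≠ ⊤) (hst : s ⊆ t)
    (hg : MemLp g (ENNReal.ofReal r) (μ.restrict t)) :
    ∫ x in s, |g x| ∂μ ≤ μ.real s ^ (1 - 1 / r) * (∫ x in t, |g x| ^ r ∂μ) ^ (1 / r) := by
  have : IsFiniteMeasure (μ.restrict s) := isFiniteMeasure_restrict.mpr hμs
  have hconj := Real.HolderConjugate.conjExponent hr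
  have holder := integral_mul_le_Lp_mul_Lq_of_nonneg hconj
    (.of_forall fun x => abs_nonneg (g x)) (.of_forall fun _ => zero_le_one)
    (hg.abs.mono_measure (Measure.restrict_mono hst le_rfl)) (memLp_const (1 : ℝ))
  have hconj_inv : 1 / r.conjExponent = 1 - 1 / r := by
    rw [eq_sub_iff_add_eq, add_comm, one_div, one_div]; exact hconj.inv_add_inv_eq_one
  have hr_ne : ENNReal.ofReal r ≠ 0 := by rw [ne_eq, ENNReal.ofReal_eq_zero, not_le]; linarith
  have hg_int : IntegrableOn (fun x => |g x| ^ r) t μ := by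
    simpa [IntegrableOn, ENNReal.toReal_ofReal (by linarith : 0 ≤ r), Real.norm_eq_abs]
      using hg.integrable_norm_rpow hr_ne ENNReal.ofReal_ne_top
  have hmono : ∫ x in s, |g x| ^ r ∂μ ≤ ∫ x in t, |g x| ^ r ∂μ :=
    setIntegral_mono_set hg_int (.of_forall fun x => by positivity) hst.eventuallyLE
  simp only [mul_one, Real.one_rpow, setIntegral_const, smul_eq_mul, hconj_inv] at holder
  calc ∫ x in s, |g x| ∂μ
      ≤ (∫ x in s, |g x| ^ r ∂μ) ^ (1 / r) * μ.real s ^ (1 - 1 / r) := holder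
    _ ≤ (∫ x in t, |g x| ^ r ∂μ) ^ (1 / r) * μ.real s ^ (1 - 1 / r) := by
        gcongr
    _ = _ := mul_comm _ _

theorem integrableOn_Icc_of_memLp_Ioo {g : ℝ → ℝ} {a b r : ℝ} (hr : 1 ≤ r)
    (hg : MemLp g (ENNReal.ofReal r) (volume.restrict (Ioo a b))) :
    IntegrableOn g (Icc a b) :=
  IntegrableOn.congr_set_ae (hg.integrable (ENNReal.one_le_ofReal.mpr hr)) Ioo_ae_eq_Icc.symm

theorem exists_abs_le_rpow_neg_mul_setIntegral_rpow {u : ℝ → ℝ} {a b q : ℝ} (hab : a < b)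
    (hq : 0 < q) (hu : ContinuousOn u (Icc a b)) :
    ∃ y ∈ Icc a b, |u y| ≤ (b - a) ^ (-(1 / q)) * (∫ t in Ioo a b, |u t| ^ q) ^ (1 / q) := by
  obtain ⟨y, hy, hy_min⟩ := isCompact_Icc.exists_isMinOn (nonempty_Icc.mpr hab.le) hu.abs
  refine ⟨y, hy, ?_⟩
  have hmean : (b - a) * |u y| ^ q ≤ ∫ t in Ioo a b, |u t| ^ q := by
    have := setIntegral_ge_of_const_le (c := |u y| ^ q) (μ := volume) measurableSet_Ioo
      (by simp) (fun t ht => Real.rpow_le_rpow (abs_nonneg _)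
          (hy_min (Ioo_subset_Icc_self ht)) hq.le)
      ((hu.abs.rpow_const fun _ _ => Or.inr hq.le).integrableOn_Icc.mono_set Ioo_subset_Icc_self)
    simpa [Real.volume_real_Ioo_of_le hab.le] using this
  have hint_nonneg : 0 ≤ ∫ t in Ioo a b, |u t| ^ q :=
    setIntegral_nonneg measurableSet_Ioo fun _ _ => by positivity
  have hba : 0 < b - a := sub_pos.mpr hab
  rw [Real.rpow_neg hba.le, ← Real.inv_rpow hba.le, ← Real.mul_rpow (by positivity) hint_nonneg,
    one_div, Real.le_rpow_inv_iff_of_pos (abs_nonneg _) (by positivity) hq, inv_mul_eq_div,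
    le_div_iff₀ hba]
  linarith

theorem nonpos_of_forall_le_rpow_mul {M B t : ℝ} (ht : 0 < t)
    (hM : ∀ δ ∈ Ioc (0 : ℝ) 1, M ≤ δ ^ t * B) : M ≤ 0 := by
  have hlim : Tendsto (fun δ : ℝ => δ ^ t * B) (𝓝[>] 0) (𝓝 0) := by
    simpa [Real.zero_rpow ht.ne'] using
      ((Real.continuousAt_rpow_const 0 t (Or.inr ht.le)).tendsto.mono_left
        nhdsWithin_le_nhds).mul_const B
  exact ge_of_tendsto hlim (by filter_upwards [Ioc_mem_nhdsGT one_pos] using hM)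

theorem le_two_mul_rpow_mul_rpow_of_forall_le {M A B s t θ : ℝ} (hs : 0 < s) (ht : 0 < t)
    (hθ : θ * (s + t) = s) (hA : 0 ≤ A) (hB : 0 ≤ B) (hMB : M ≤ B)
    (hM : ∀ δ ∈ Ioc (0 : ℝ) 1, M ≤ δ ^ (-s) * A + δ ^ t * B) :
    M ≤ 2 * B ^ θ * A ^ (1 - θ) := by
  have hst : 0 < s + t := by linarith
  have hθ_eq : θ = s / (s + t) := by field_simp; linarith
  have hθ_pos : 0 < θ := by rw [hθ_eq]; positivity
  have hθ_lt : θ < 1 := by rw [hθ_eq, div_lt_one hst]; linarith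
  have hsplit : ∀ {x : ℝ}, 0 ≤ x → x = x ^ θ * x ^ (1 - θ) := fun hx => by
    rw [← Real.rpow_add' hx (by norm_num), add_sub_cancel, Real.rpow_one]
  have hRHS : 0 ≤ B ^ θ * A ^ (1 - θ) := by positivity
  rcases le_or_gt B A with hBA | hAB
  · calc M ≤ B := hMB
      _ = B ^ θ * B ^ (1 - θ) := hsplit hB
      _ ≤ B ^ θ * A ^ (1 - θ) := by gcongr
      _ ≤ 2 * B ^ θ * A ^ (1 - θ) := by linarith
  rcases hA.eq_or_lt with hA0 | hA_pos
  · subst hA0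
    refine (nonpos_of_forall_le_rpow_mul ht fun δ hδ => by simpa using hM δ hδ).trans ?_
    simp [Real.zero_rpow (by linarith : 1 - θ ≠ 0)]
  -- the two terms balance at `δ = (A / B) ^ (1 / (s + t))`
  have hB_pos : 0 < B := hA_pos.trans hAB
  have hAB_pos : 0 < A / B := div_pos hA_pos hB_pos
  set δ := (A / B) ^ (1 / (s + t))
  have hδ : δ ∈ Ioc (0 : ℝ) 1 := ⟨by positivity,
    Real.rpow_le_one hAB_pos.le ((div_le_one hB_pos).mpr hAB.le) (by positivity)⟩
  have h₁ : δ ^ (-s) * A = B ^ θ * A ^ (1 - θ) := by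
    rw [← Real.rpow_mul hAB_pos.le, show 1 / (s + t) * -s = -θ by rw [hθ_eq]; ring,
      Real.div_rpow hA hB, Real.rpow_neg hA, Real.rpow_neg hB, Real.rpow_sub hA_pos,
      Real.rpow_one]
    field_simp
  have h₂ : δ ^ t * B = B ^ θ * A ^ (1 - θ) := by
    rw [← Real.rpow_mul hAB_pos.le, show 1 / (s + t) * t = 1 - θ by rw [hθ_eq]; field_simp; ring,
      Real.div_rpow hA hB, Real.rpow_sub hB_pos, Real.rpow_one]
    field_simp
  linarith [hM δ hδ]

section Primitive

variable {u g : ℝ → ℝ}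

theorem continuousOn_Icc_of_eq_primitive
    (hu : ∀ x ∈ Icc (0 : ℝ) 1, u x = ∫ t in (0 : ℝ)..x, g t) (hg : IntegrableOn g (Icc 0 1)) :
    ContinuousOn u (Icc 0 1) := by
  have := intervalIntegral.continuousOn_primitive_interval (μ := volume) (a := 0) (b := 1)
    (f := g) (by rwa [uIcc_of_le zero_le_one])
  rw [uIcc_of_le zero_le_one] at this
  exact this.congr hu

theorem abs_sub_le_setIntegral_abs_of_eq_primitive
    (hu : ∀ x ∈ Icc (0 : ℝ) 1, u x = ∫ t in (0 : ℝ)..x, g t) (hg : IntegrableOn g (Icc 0 1))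
    {a b x y : ℝ}
    (ha : 0 ≤ a) (hb : b ≤ 1) (hx : x ∈ Icc a b) (hy : y ∈ Icc a b) :
    |u x - u y| ≤ ∫ t in Ioo a b, |g t| := by
  have hsub : Icc a b ⊆ Icc 0 1 := Icc_subset_Icc ha hb
  have hint : ∀ z ∈ Icc a b, IntervalIntegrable g volume 0 z := fun z hz =>
    (hg.mono_set (by rw [uIcc_of_le (hsub hz).1]; exact Icc_subset_Icc le_rfl (hsub hz).2)
      ).intervalIntegrable
  rw [hu x (hsub hx), hu y (hsub hy),
    intervalIntegral.integral_interval_sub_left (hint x hx) (hint y hy),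
    ← integral_Ioc_eq_integral_Ioo]
  calc |∫ t in y..x, g t| ≤ ∫ t in uIoc y x, |g t| := by
        simpa only [Real.norm_eq_abs] using
          intervalIntegral.norm_integral_le_integral_norm_uIoc (f := g)
    _ ≤ ∫ t in Ioc a b, |g t| :=
        setIntegral_mono_set (hg.mono_set (Ioc_subset_Icc_self.trans hsub)).abs
          (.of_forall fun _ => abs_nonneg _)
          (Ioc_subset_Ioc (le_min hy.1 hx.1) (max_le hy.2 hx.2)).eventuallyLE

theorem abs_sub_le_rpow_mul_of_eq_primitive
    (hu : ∀ x ∈ Icc (0 : ℝ) 1, u x = ∫ t in (0 : ℝ)..x, g t) {r : ℝ} (hr : 1 < r)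
    (hg : MemLp g (ENNReal.ofReal r) (volume.restrict (Ioo 0 1))) {a b x y : ℝ}
    (ha : 0 ≤ a) (hb : b ≤ 1) (hx : x ∈ Icc a b) (hy : y ∈ Icc a b) :
    |u x - u y| ≤ (b - a) ^ (1 - 1 / r) * (∫ t in Ioo 0 1, |g t| ^ r) ^ (1 / r) := by
  have := setIntegral_abs_le_measureReal_rpow_mul hr (by simp) (Ioo_subset_Ioo ha hb) hg
  rw [Real.volume_real_Ioo_of_le (hx.1.trans hx.2)] at this
  exact (abs_sub_le_setIntegral_abs_of_eq_primitive hu (integrableOn_Icc_of_memLp_Ioo hr.le hg)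
    ha hb hx hy).trans this

theorem abs_le_rpow_neg_mul_add_rpow_mul_of_eq_primitive {q r : ℝ} (hq : 0 < q) (hr : 1 < r)
    (hu : ∀ x ∈ Icc (0 : ℝ) 1, u x = ∫ t in (0 : ℝ)..x, g t)
    (hg : MemLp g (ENNReal.ofReal r) (volume.restrict (Ioo 0 1))) {x δ : ℝ} (hx : x ∈ Icc 0 1)
    (hδ : δ ∈ Ioc 0 1) :
    |u x| ≤ δ ^ (-(1 / q)) * (∫ t in Ioo 0 1, |u t| ^ q) ^ (1 / q)
      + δ ^ (1 - 1 / r) * (∫ t in Ioo 0 1, |g t| ^ r) ^ (1 / r) := by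
  set a := min x (1 - δ)
  have ha : 0 ≤ a := le_min hx.1 (by linarith [hδ.2])
  have hb : a + δ ≤ 1 := by linarith [min_le_right x (1 - δ)]
  have hx_mem : x ∈ Icc a (a + δ) := ⟨min_le_left _ _, by
    rcases min_cases x (1 - δ) with ⟨h, -⟩ | ⟨h, -⟩ <;> simp only [a, h] <;>
      linarith [hx.2, hδ.1]⟩
  have hu_cont := continuousOn_Icc_of_eq_primitive hu (integrableOn_Icc_of_memLp_Ioo hr.le hg)
  obtain ⟨y, hy, hy_le⟩ := exists_abs_le_rpow_neg_mul_setIntegral_rpow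
    (by linarith [hδ.1] : a < a + δ) hq (hu_cont.mono (Icc_subset_Icc ha hb))
  rw [add_sub_cancel_left] at hy_le
  have huq_int : IntegrableOn (fun t => |u t| ^ q) (Ioo 0 1) :=
    (hu_cont.abs.rpow_const fun _ _ => Or.inr hq.le).integrableOn_Icc.mono_set Ioo_subset_Icc_self
  have hLq_mono :
      (∫ t in Ioo a (a + δ), |u t| ^ q) ^ (1 / q) ≤ (∫ t in Ioo 0 1, |u t| ^ q) ^ (1 / q) := by
    refine Real.rpow_le_rpow (setIntegral_nonneg measurableSet_Ioo fun _ _ => by positivity) ?_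
      (by positivity)
    exact setIntegral_mono_set huq_int (.of_forall fun _ => by positivity)
      (Ioo_subset_Ioo ha hb).eventuallyLE
  have hdiff := abs_sub_le_rpow_mul_of_eq_primitive hu hr hg ha hb hx_mem hy
  rw [add_sub_cancel_left] at hdiff
  calc |u x| ≤ |u y| + |u x - u y| := by linarith [abs_sub_abs_le_abs_sub (u x) (u y)]
    _ ≤ _ := by
        gcongr
        exact hy_le.trans (mul_le_mul_of_nonneg_left hLq_mono (Real.rpow_nonneg hδ.1.le _))

end Primitive

/-- Gagliardo–Nirenberg-type sup-norm interpolation inequality on `(0,1)`: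
if `α(1/q + 1 − 1/r) = 1/q` with `q, r ∈ [1,∞)`, `α ∈ (0,1)`, then there is `C > 0` such that
for every `u ∈ W₀^{1,r}((0,1),ℝ)` with weak derivative `g`,
`sup_{x∈[0,1]} |u(x)| ≤ C (‖u‖_{L^r} + ‖g‖_{L^r})^α ‖u‖_{L^q}^{1−α}`. -/
theorem stmt8 (q r α : ℝ) (hq : 1 ≤ q) (hr : 1 ≤ r) (hα : α ∈ Set.Ioo (0 : ℝ) 1)
    (heq : α * (1 / q + 1 - 1 / r) = 1 / q) :
    ∃ C : ℝ, 0 < C ∧ ∀ u g : ℝ → ℝ,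
      MemLp g (ENNReal.ofReal r) (volume.restrict (Set.Ioo (0 : ℝ) 1)) →
      (∀ x ∈ Set.Icc (0 : ℝ) 1, u x = ∫ t in (0 : ℝ)..x, g t) →
      u 1 = 0 →
      ∀ x ∈ Set.Icc (0 : ℝ) 1,
        |u x| ≤ C * ((∫ t in Set.Ioo (0 : ℝ) 1, |u t| ^ r) ^ (1 / r)
                      + (∫ t in Set.Ioo (0 : ℝ) 1, |g t| ^ r) ^ (1 / r)) ^ α
                  * ((∫ t in Set.Ioo (0 : ℝ) 1, |u t| ^ q) ^ (1 / q)) ^ (1 - α) := by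
  have hq_inv : 0 < 1 / q := by positivity
  have hr_inv : 1 / r ≤ 1 := (div_le_one (by linarith)).mpr hr
  have ht : 0 < 1 - 1 / r := by nlinarith [hα.2]
  have hr' : 1 < r := by rwa [sub_pos, div_lt_one (by linarith)] at ht
  refine ⟨2, two_pos, fun u g hg hu _ x hx => ?_⟩
  have hu0 : u 0 = 0 := by simp [hu 0 ⟨le_rfl, zero_le_one⟩]
  have hLr_g : |u x| ≤ (∫ t in Ioo 0 1, |g t| ^ r) ^ (1 / r) := by
    simpa [hu0] using
      abs_sub_le_rpow_mul_of_eq_primitive hu hr' hg le_rfl le_rfl hx ⟨le_rfl, zero_le_one⟩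
  calc |u x|
      ≤ 2 * ((∫ t in Ioo 0 1, |g t| ^ r) ^ (1 / r)) ^ α
          * ((∫ t in Ioo 0 1, |u t| ^ q) ^ (1 / q)) ^ (1 - α) :=
        le_two_mul_rpow_mul_rpow_of_forall_le hq_inv ht (by linarith) (by positivity)
          (by positivity) hLr_g fun δ hδ =>
          abs_le_rpow_neg_mul_add_rpow_mul_of_eq_primitive (by positivity) hr' hu hg hx hδ
    _ ≤ _ := by
        have := hα.1.le
        gcongr
        rw [le_add_iff_nonneg_left]
        positivity
end

section
/- Let c_1 ∈ ℝ and let v, w ∈ W_0^{1,2}((0,1),ℝ) with weak derivatives g_v, g_w ∈ L²((0,1),ℝ). Then: (i) the function v² belongs to W^{1,2}((0,1),ℝ) with weak derivative 2·v·g_v, i.e. v·g_v ∈ L²((0,1),ℝ) and v(x)² = ∫_0^x 2·v(t)·g_v(t) dt for all x ∈ [0,1]; and (ii) the Burgers nonlinearity F(u) = c_1·u·∂u satisfies the local Lipschitz estimate ‖c_1·(v·g_v − w·g_w)‖_{L²((0,1))} ≤ (|c_1|/√3)·(‖g_v‖_{L²((0,1))} + ‖g_w‖_{L²((0,1))})·‖g_v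 − g_w‖_{L²((0,1))}. -/
/-!
If `v(0) = v(1) = 0` and `v' = g`, then `v(x) = ∫₀¹ (1_{t<x} - x) g(t) dt`, so Cauchy–Schwarz gives
`|v(x)| ≤ √(x(1-x)) ‖g‖ ≤ ‖g‖/2`. Writing `v g_v - w g_w = v (g_v - g_w) + (v - w) g_w` and applying
this bound to `v` and `v - w` yields the estimate with the constant `|c₁|/2 ≤ |c₁|/√3`. Part (i) is
the product rule for absolutely continuous functions.
-/

open MeasureTheory Set

section L2

variable {α : Type*} [MeasurableSpace α] {μ : Measure α}

lemma sqrt_integral_sq_eq_lpNorm {f : α → ℝ} (hf : AEStronglyMeasurable f μ) :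
    √(∫ x, f x ^ 2 ∂μ) = lpNorm f 2 μ := by
  rw [lpNorm_eq_integral_norm_rpow_toReal two_ne_zero ENNReal.ofNat_ne_top hf, Real.sqrt_eq_rpow]
  norm_num [Real.norm_eq_abs]

lemma abs_integral_mul_le_lpNorm_mul_lpNorm {f g : α → ℝ} (hf : MemLp f 2 μ) (hg : MemLp g 2 μ) :
    |∫ x, f x * g x ∂μ| ≤ lpNorm f 2 μ * lpNorm g 2 μ := by
  have h2 : ENNReal.ofReal 2 = 2 := by norm_num
  calc |∫ x, f x * g x ∂μ| ≤ ∫ x, ‖f x‖ * ‖g x‖ ∂μ := by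
        simpa only [Real.norm_eq_abs, norm_mul] using
          norm_integral_le_integral_norm (μ := μ) (fun x => f x * g x)
    _ ≤ (∫ x, ‖f x‖ ^ (2:ℝ) ∂μ) ^ (1 / 2 : ℝ) * (∫ x, ‖g x‖ ^ (2:ℝ) ∂μ) ^ (1 / 2 : ℝ) :=
        integral_mul_norm_le_Lp_mul_Lq .two_two (h2 ▸ hf) (h2 ▸ hg)
    _ = lpNorm f 2 μ * lpNorm g 2 μ := by
        rw [lpNorm_eq_integral_norm_rpow_toReal two_ne_zero ENNReal.ofNat_ne_top hf.1,
          lpNorm_eq_integral_norm_rpow_toReal two_ne_zero ENNReal.ofNat_ne_top hg.1]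
        norm_num

lemma lpNorm_le_mul_lpNorm_of_ae_le_mul {p : ENNReal} {f g : α → ℝ} {c : ℝ} (hc : 0 ≤ c)
    (hg : MemLp g p μ) (h : ∀ᵐ x ∂μ, ‖f x‖ ≤ c * ‖g x‖) :
    lpNorm f p μ ≤ c * lpNorm g p μ := by
  by_cases hf : AEStronglyMeasurable f μ
  · rw [← toReal_eLpNorm hf, ← toReal_eLpNorm hg.1, ← ENNReal.toReal_ofReal hc,
      ← ENNReal.toReal_mul]
    exact ENNReal.toReal_mono (ENNReal.mul_ne_top ENNReal.ofReal_ne_top hg.2.ne)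
      (eLpNorm_le_mul_eLpNorm_of_ae_le_mul h p)
  · rw [lpNorm_of_not_aestronglyMeasurable hf]
    exact mul_nonneg hc lpNorm_nonneg

end L2

lemma sq_intervalIntegral_eq {g : ℝ → ℝ} {a b : ℝ} (hg : IntervalIntegrable g volume a b) :
    (∫ t in a..b, g t) ^ 2 = ∫ t in a..b, 2 * (∫ s in a..t, g s) * g t := by
  set V : ℝ → ℝ := fun x => ∫ s in a..x, g s
  have hV : AbsolutelyContinuousOnInterval V a b :=
    hg.absolutelyContinuousOnInterval_intervalIntegral left_mem_uIcc
  have hderiv := hV.integral_deriv_mul_eq_sub hV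
  simp only [V, intervalIntegral.integral_same, mul_zero, sub_zero] at hderiv
  rw [sq, ← hderiv]
  refine intervalIntegral.integral_congr_ae ?_
  filter_upwards [hg.ae_hasDerivAt_integral] with x hx hxab
  rw [(hx (uIoc_subset_uIcc hxab) a left_mem_uIcc).deriv]
  ring

lemma MeasureTheory.MemLp.intervalIntegrable {g : ℝ → ℝ} {p : ENNReal} {a b : ℝ} (hab : a ≤ b)
    (hp : 1 ≤ p) (hg : MemLp g p (volume.restrict (Ioo a b))) : IntervalIntegrable g volume a b :=
  (intervalIntegrable_iff_integrableOn_Ioo_of_le hab).2 (hg.integrable hp)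

lemma setIntegral_Iio_restrict_Ioo {a b x : ℝ} (hx : x ∈ Icc a b) (f : ℝ → ℝ) :
    ∫ t in Iio x, f t ∂volume.restrict (Ioo a b) = ∫ t in a..x, f t := by
  rw [Measure.restrict_restrict measurableSet_Iio, intervalIntegral.integral_of_le hx.1,
    integral_Ioc_eq_integral_Ioo, Iio_inter_Ioo, min_eq_left hx.2]

local notation "μ₀" => volume.restrict (Ioo (0 : ℝ) 1)

lemma lpNorm_indicator_Iio_sub {x : ℝ} (hx : x ∈ Icc (0 : ℝ) 1) :
    lpNorm (fun t => (Iio x).indicator (fun _ => (1 : ℝ)) t - x) 2 μ₀ = √(x * (1 - x)) := by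
  have hmeas : AEStronglyMeasurable (fun t => (Iio x).indicator (fun _ => (1 : ℝ)) t - x) μ₀ :=
    ((aestronglyMeasurable_const.indicator measurableSet_Iio).sub aestronglyMeasurable_const)
  rw [← sqrt_integral_sq_eq_lpNorm hmeas]
  congr 1
  have hsq : ∀ t, ((Iio x).indicator (fun _ => (1 : ℝ)) t - x) ^ 2
      = (1 - 2 * x) * (Iio x).indicator (fun _ => (1 : ℝ)) t + x ^ 2 := by
    intro t
    by_cases ht : t ∈ Iio x
    · rw [indicator_of_mem ht]; ring
    · rw [indicator_of_notMem ht]; ring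
  have hind : Integrable ((Iio x).indicator (fun _ => (1 : ℝ))) μ₀ :=
    (integrable_const 1).indicator measurableSet_Iio
  have hvol : ∫ t, (Iio x).indicator (fun _ => (1 : ℝ)) t ∂μ₀ = x := by
    rw [integral_indicator measurableSet_Iio, setIntegral_Iio_restrict_Ioo hx]
    simp
  simp_rw [hsq]
  rw [integral_add (hind.const_mul _) (integrable_const _), integral_const_mul, hvol]
  simp only [integral_const, MeasurableSet.univ, measureReal_restrict_apply, univ_inter,
    Real.volume_real_Ioo, sub_zero, zero_le_one, sup_of_le_left, smul_eq_mul, one_mul]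
  ring

lemma abs_intervalIntegral_le_half_lpNorm {g : ℝ → ℝ} (hg : MemLp g 2 μ₀)
    (h0 : ∫ t in (0 : ℝ)..1, g t = 0) {x : ℝ} (hx : x ∈ Icc (0 : ℝ) 1) :
    |∫ t in (0 : ℝ)..x, g t| ≤ lpNorm g 2 μ₀ / 2 := by
  set φ : ℝ → ℝ := fun t => (Iio x).indicator (fun _ => (1 : ℝ)) t - x
  have hφ : MemLp φ 2 μ₀ :=
    ((memLp_const (1 : ℝ)).indicator measurableSet_Iio).sub (memLp_const x)
  have hg1 : Integrable g μ₀ := hg.integrable one_le_two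
  have hrepr : ∫ t in (0 : ℝ)..x, g t = ∫ t, φ t * g t ∂μ₀ := by
    have hint1 : ∫ t, g t ∂μ₀ = 0 := by
      rw [← integral_Ioc_eq_integral_Ioo, ← intervalIntegral.integral_of_le zero_le_one, h0]
    have hpt : ∀ t, φ t * g t = (Iio x).indicator g t - x * g t := by
      intro t; by_cases ht : t ∈ Iio x <;> simp [φ, ht, sub_mul]
    simp_rw [hpt]
    rw [integral_sub (hg1.indicator measurableSet_Iio) (hg1.const_mul x),
      integral_indicator measurableSet_Iio, setIntegral_Iio_restrict_Ioo hx,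
      integral_const_mul, hint1, mul_zero, sub_zero]
  have hx4 : √(x * (1 - x)) ≤ 1 / 2 :=
    Real.sqrt_le_iff.2 ⟨by norm_num, by nlinarith [sq_nonneg (x - 1 / 2)]⟩
  calc |∫ t in (0 : ℝ)..x, g t| ≤ lpNorm φ 2 μ₀ * lpNorm g 2 μ₀ :=
        hrepr ▸ abs_integral_mul_le_lpNorm_mul_lpNorm hφ hg
    _ ≤ 1 / 2 * lpNorm g 2 μ₀ := by
        rw [lpNorm_indicator_Iio_sub hx]
        exact mul_le_mul_of_nonneg_right hx4 lpNorm_nonneg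
    _ = lpNorm g 2 μ₀ / 2 := by ring

/-- `v ∈ W₀^{1,2}(0,1)` with weak derivative `g`. -/
structure IsH01Primitive (v g : ℝ → ℝ) : Prop where
  memLp : MemLp g 2 μ₀
  eq_integral : ∀ x ∈ Icc (0 : ℝ) 1, v x = ∫ t in (0 : ℝ)..x, g t
  apply_one : v 1 = 0

namespace IsH01Primitive

variable {v w g h : ℝ → ℝ}

lemma integral_eq_zero (hv : IsH01Primitive v g) : ∫ t in (0 : ℝ)..1, g t = 0 := by
  rw [← hv.eq_integral 1 ⟨zero_le_one, le_rfl⟩, hv.apply_one]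

lemma intervalIntegrable (hv : IsH01Primitive v g) {x : ℝ} (hx : x ∈ Icc (0 : ℝ) 1) :
    IntervalIntegrable g volume 0 x :=
  (hv.memLp.intervalIntegrable zero_le_one one_le_two).mono_set
    (uIcc_subset_uIcc_left (by rwa [uIcc_of_le zero_le_one]))

lemma sub (hv : IsH01Primitive v g) (hw : IsH01Primitive w h) :
    IsH01Primitive (v - w) (g - h) where
  memLp := hv.memLp.sub hw.memLp
  eq_integral x hx := by
    rw [Pi.sub_apply, hv.eq_integral x hx, hw.eq_integral x hx,
      ← intervalIntegral.integral_sub (hv.intervalIntegrable hx) (hw.intervalIntegrable hx)]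
    rfl
  apply_one := by rw [Pi.sub_apply, hv.apply_one, hw.apply_one, sub_zero]

lemma abs_le (hv : IsH01Primitive v g) {x : ℝ} (hx : x ∈ Icc (0 : ℝ) 1) :
    |v x| ≤ lpNorm g 2 μ₀ / 2 :=
  hv.eq_integral x hx ▸ abs_intervalIntegral_le_half_lpNorm hv.memLp hv.integral_eq_zero hx

lemma aestronglyMeasurable (hv : IsH01Primitive v g) : AEStronglyMeasurable v μ₀ := by
  have hcont : ContinuousOn v (Icc 0 1) := by
    have hprim := intervalIntegral.continuousOn_primitive_interval'
      (hv.memLp.intervalIntegrable zero_le_one one_le_two) left_mem_uIcc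
    rw [uIcc_of_le zero_le_one] at hprim
    exact hprim.congr hv.eq_integral
  exact (hcont.mono Ioo_subset_Icc_self).aestronglyMeasurable measurableSet_Ioo

lemma ae_norm_mul_le (hv : IsH01Primitive v g) :
    ∀ᵐ t ∂μ₀, ‖(v * h) t‖ ≤ lpNorm g 2 μ₀ / 2 * ‖h t‖ := by
  filter_upwards [ae_restrict_mem measurableSet_Ioo] with t ht
  rw [Pi.mul_apply, norm_mul, Real.norm_eq_abs]
  exact mul_le_mul_of_nonneg_right (hv.abs_le (Ioo_subset_Icc_self ht)) (norm_nonneg _)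

lemma memLp_mul (hv : IsH01Primitive v g) (hh : MemLp h 2 μ₀) : MemLp (v * h) 2 μ₀ :=
  hh.of_le_mul (hv.aestronglyMeasurable.mul hh.1) hv.ae_norm_mul_le

lemma lpNorm_mul_le (hv : IsH01Primitive v g) (hh : MemLp h 2 μ₀) :
    lpNorm (v * h) 2 μ₀ ≤ lpNorm g 2 μ₀ / 2 * lpNorm h 2 μ₀ :=
  lpNorm_le_mul_lpNorm_of_ae_le_mul (div_nonneg lpNorm_nonneg zero_le_two) hh hv.ae_norm_mul_le

lemma sq_eq_integral (hv : IsH01Primitive v g) :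
    ∀ x ∈ Icc (0 : ℝ) 1, v x ^ 2 = ∫ t in (0 : ℝ)..x, 2 * v t * g t := by
  intro x hx
  rw [hv.eq_integral x hx, sq_intervalIntegral_eq (hv.intervalIntegrable hx)]
  refine intervalIntegral.integral_congr fun t ht => ?_
  rw [uIcc_of_le hx.1] at ht
  rw [hv.eq_integral t ⟨ht.1, ht.2.trans hx.2⟩]

end IsH01Primitive

/-- For `v, w ∈ W₀^{1,2}((0,1),ℝ)` with weak derivatives `g_v, g_w`:
(i) `v²` belongs to `W^{1,2}((0,1),ℝ)` with weak derivative `2 v g_v`; (ii) the Burgers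
nonlinearity `F(u) = c₁ u ∂u` satisfies the local Lipschitz estimate
`‖c₁(v g_v − w g_w)‖_{L²} ≤ (|c₁|/√3)(‖g_v‖_{L²} + ‖g_w‖_{L²})‖g_v − g_w‖_{L²}`. -/
theorem stmt10 (c₁ : ℝ) (v w gv gw : ℝ → ℝ)
    (hgv : MemLp gv 2 (volume.restrict (Set.Ioo (0 : ℝ) 1)))
    (hgw : MemLp gw 2 (volume.restrict (Set.Ioo (0 : ℝ) 1)))
    (hv : ∀ x ∈ Set.Icc (0 : ℝ) 1, v x = ∫ t in (0 : ℝ)..x, gv t) (hv1 : v 1 = 0)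
    (hw : ∀ x ∈ Set.Icc (0 : ℝ) 1, w x = ∫ t in (0 : ℝ)..x, gw t) (hw1 : w 1 = 0) :
    (MemLp (fun t => v t * gv t) 2 (volume.restrict (Set.Ioo (0 : ℝ) 1)) ∧
      ∀ x ∈ Set.Icc (0 : ℝ) 1, v x ^ 2 = ∫ t in (0 : ℝ)..x, 2 * v t * gv t) ∧
    Real.sqrt (∫ x in Set.Ioo (0 : ℝ) 1, (c₁ * (v x * gv x - w x * gw x)) ^ 2)
      ≤ |c₁| / Real.sqrt 3 *
          (Real.sqrt (∫ x in Set.Ioo (0 : ℝ) 1, gv x ^ 2)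
            + Real.sqrt (∫ x in Set.Ioo (0 : ℝ) 1, gw x ^ 2)) *
          Real.sqrt (∫ x in Set.Ioo (0 : ℝ) 1, (gv x - gw x) ^ 2) := by
  have hV : IsH01Primitive v gv := ⟨hgv, hv, hv1⟩
  have hW : IsH01Primitive w gw := ⟨hgw, hw, hw1⟩
  refine ⟨⟨hV.memLp_mul hgv, hV.sq_eq_integral⟩, ?_⟩
  have hsplit : (fun x => c₁ * (v x * gv x - w x * gw x))
      = c₁ • (v * (gv - gw) + (v - w) * gw) := by
    ext x; simp only [Pi.smul_apply, Pi.add_apply, Pi.mul_apply, Pi.sub_apply, smul_eq_mul]; ring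
  have hmeas : AEStronglyMeasurable (fun x => c₁ * (v x * gv x - w x * gw x)) μ₀ :=
    hsplit ▸ ((hV.memLp_mul (hgv.sub hgw)).add ((hV.sub hW).memLp_mul hgw)).1.const_smul c₁
  have hsqrt3 : √3 ≤ 2 := Real.sqrt_le_iff.2 ⟨zero_le_two, by norm_num⟩
  rw [sqrt_integral_sq_eq_lpNorm hmeas, sqrt_integral_sq_eq_lpNorm hgv.1,
    sqrt_integral_sq_eq_lpNorm hgw.1,
    sqrt_integral_sq_eq_lpNorm (f := fun x => gv x - gw x) (hgv.sub hgw).1, hsplit,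
    lpNorm_const_smul]
  set a := lpNorm gv 2 μ₀
  set b := lpNorm gw 2 μ₀
  set d := lpNorm (gv - gw) 2 μ₀
  calc ‖c₁‖₊ * lpNorm (v * (gv - gw) + (v - w) * gw) 2 μ₀
      ≤ |c₁| * (a / 2 * d + d / 2 * b) := by
        refine mul_le_mul_of_nonneg_left ?_ (abs_nonneg c₁)
        refine (lpNorm_add_le (hV.memLp_mul (hgv.sub hgw)) one_le_two).trans ?_
        exact add_le_add (hV.lpNorm_mul_le (hgv.sub hgw)) ((hV.sub hW).lpNorm_mul_le hgw)
    _ = |c₁| / 2 * (a + b) * d := by ring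
    _ ≤ |c₁| / √3 * (a + b) * d := by
        have hab : 0 ≤ a + b := add_nonneg lpNorm_nonneg lpNorm_nonneg
        have hd : 0 ≤ d := lpNorm_nonneg
        gcongr
end

section
/- Let c_0 ∈ (0,∞) and c_1 ∈ ℝ. Then there exists C ∈ (0,∞) such that for every ε ∈ (0,∞) and every v, w ∈ W_0^{1,2}((0,1),ℝ) with weak derivatives g_v, g_w ∈ L²((0,1),ℝ) one has c_1·∫_0^1 (w(x)·g_v(x) + v(x)·g_w(x))·w(x) dx ≤ ε·c_0·‖g_v‖²_{L²((0,1))}·‖w‖²_{L²((0,1))} + (C/ε²)·‖w‖²_{L²((0,1))} + c_0·‖g_w‖²_{L²((0,1))}. -/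
/-!
Integrating by parts with `v(0) = v(1) = 0` gives `∫ w² v' = -2 ∫ v w w'`, so the left-hand side
is `(c₁/2) ∫ w² v'`. Since `w(0) = 0`, `w(x)² = 2 ∫₀ˣ w w' ≤ 2 ‖w‖ ‖w'‖` (Agmon), hence
`|∫ w² v'| ≤ ‖w‖_∞ ‖w‖ ‖v'‖ ≤ √(2 ‖w‖ ‖w'‖) ‖w‖ ‖v'‖`, and two applications of Young's inequality
split this into the three terms on the right. Integration by parts for primitives of integrable
functions comes from the fundamental theorem of calculus for absolutely continuous functions.
-/

open MeasureTheory Set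

theorem intervalIntegral.integral_mul_primitive_add_primitive_mul {f g : ℝ → ℝ} {a b : ℝ}
    (hf : IntervalIntegrable f volume a b) (hg : IntervalIntegrable g volume a b) :
    ∫ x in a..b, (f x * ∫ t in a..x, g t) + (∫ t in a..x, f t) * g x =
      (∫ x in a..b, f x) * ∫ x in a..b, g x := by
  have hF := hf.absolutelyContinuousOnInterval_intervalIntegral (c := a) left_mem_uIcc
  have hG := hg.absolutelyContinuousOnInterval_intervalIntegral (c := a) left_mem_uIcc
  have h := hF.integral_deriv_mul_eq_sub hG
  simp only [intervalIntegral.integral_same, mul_zero, sub_zero] at h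
  rw [← h]
  refine intervalIntegral.integral_congr_ae ?_
  filter_upwards [hf.ae_hasDerivAt_integral, hg.ae_hasDerivAt_integral] with x hfx hgx hx
  have hx' : x ∈ uIcc a b := uIoc_subset_uIcc hx
  rw [(hfx hx' a left_mem_uIcc).deriv, (hgx hx' a left_mem_uIcc).deriv]

theorem intervalIntegral.sq_integral_eq_two_mul_integral_primitive_mul {g : ℝ → ℝ} {a b : ℝ}
    (hg : IntervalIntegrable g volume a b) :
    (∫ x in a..b, g x) ^ 2 = 2 * ∫ x in a..b, (∫ t in a..x, g t) * g x := by
  rw [sq, ← intervalIntegral.integral_mul_primitive_add_primitive_mul hg hg,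
    ← intervalIntegral.integral_const_mul]
  congr 1 with x
  ring

theorem integral_abs_mul_le_sqrt_mul_sqrt {α : Type*} [MeasurableSpace α] {μ : Measure α}
    {f g : α → ℝ} (hf : MemLp f 2 μ) (hg : MemLp g 2 μ) :
    ∫ x, |f x * g x| ∂μ ≤ √(∫ x, f x ^ 2 ∂μ) * √(∫ x, g x ^ 2 ∂μ) := by
  have h := integral_mul_norm_le_Lp_mul_Lq Real.HolderConjugate.two_two
    (by simpa using hf) (by simpa using hg)
  simpa [abs_mul, Real.sqrt_eq_rpow] using h

theorem ContinuousOn.memLp_restrict_of_isCompact {α : Type*} [TopologicalSpace α]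
    [MeasurableSpace α] [OpensMeasurableSpace α] [T2Space α] {μ : Measure α}
    [IsFiniteMeasureOnCompacts μ] {f : α → ℝ} {K : Set α} (hf : ContinuousOn f K)
    (hK : IsCompact K) (p : ENNReal) : MemLp f p (μ.restrict K) := by
  obtain ⟨C, hC⟩ := hK.exists_bound_of_continuousOn hf
  have : IsFiniteMeasure (μ.restrict K) := isFiniteMeasure_restrict.2 hK.measure_lt_top.ne
  exact MemLp.of_bound (hf.aestronglyMeasurable_of_isCompact hK hK.isClosed.measurableSet) C
    ((ae_restrict_iff' hK.isClosed.measurableSet).2 (ae_of_all _ hC))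

theorem intervalIntegrable_of_memLp_Ioo {g : ℝ → ℝ} {a b : ℝ} (hab : a ≤ b)
    (hg : MemLp g 2 (volume.restrict (Ioo a b))) : IntervalIntegrable g volume a b :=
  (intervalIntegrable_iff_integrableOn_Ioo_of_le hab).2 (hg.integrable one_le_two)

section Primitive

variable {a b : ℝ} {v w gv gw : ℝ → ℝ}

theorem continuousOn_of_eq_primitive (hab : a ≤ b) (hgw : IntervalIntegrable gw volume a b)
    (hw : ∀ x ∈ Icc a b, w x = ∫ t in a..x, gw t) : ContinuousOn w (uIcc a b) := by
  refine (intervalIntegral.continuousOn_primitive_interval' hgw left_mem_uIcc).congr fun x hx => ?_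
  exact hw x (by rwa [uIcc_of_le hab] at hx)

theorem sq_eq_two_mul_integral_mul_of_eq_primitive (hgw : IntervalIntegrable gw volume a b)
    (hw : ∀ x ∈ Icc a b, w x = ∫ t in a..x, gw t) {x : ℝ} (hx : x ∈ Icc a b) :
    w x ^ 2 = 2 * ∫ t in a..x, w t * gw t := by
  have hax : uIcc a x ⊆ Icc a b := by rw [uIcc_of_le hx.1]; exact Icc_subset_Icc_right hx.2
  rw [hw x hx, intervalIntegral.sq_integral_eq_two_mul_integral_primitive_mul
    (hgw.mono_set (hax.trans (Icc_subset_uIcc)))]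
  congr 1
  exact intervalIntegral.integral_congr fun t ht => by rw [hw t (hax ht)]

theorem sq_le_two_mul_setIntegral_abs_mul_of_eq_primitive
    (hgw : IntervalIntegrable gw volume a b) (hw : ∀ x ∈ Icc a b, w x = ∫ t in a..x, gw t)
    {x : ℝ} (hx : x ∈ Icc a b) : w x ^ 2 ≤ 2 * ∫ t in Ioo a b, |w t * gw t| := by
  have hab : a ≤ b := hx.1.trans hx.2
  have hint : IntegrableOn (fun t => |w t * gw t|) (Ioc a b) :=
    ((hgw.continuousOn_mul (continuousOn_of_eq_primitive hab hgw hw)).abs).1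
  rw [sq_eq_two_mul_integral_mul_of_eq_primitive hgw hw hx, ← integral_Ioc_eq_integral_Ioo,
    intervalIntegral.integral_of_le hx.1]
  gcongr 2 * ?_
  calc ∫ t in Ioc a x, w t * gw t ≤ ∫ t in Ioc a x, |w t * gw t| :=
        (le_abs_self _).trans abs_integral_le_integral_abs
    _ ≤ ∫ t in Ioc a b, |w t * gw t| :=
        setIntegral_mono_set hint (ae_of_all _ fun t => abs_nonneg _)
          (Ioc_subset_Ioc_right hx.2).eventuallyLE

theorem setIntegral_burgers_eq_half_setIntegral_sq_mul (hab : a ≤ b)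
    (hgv : IntervalIntegrable gv volume a b) (hgw : IntervalIntegrable gw volume a b)
    (hv : ∀ x ∈ Icc a b, v x = ∫ t in a..x, gv t) (hvb : v b = 0)
    (hw : ∀ x ∈ Icc a b, w x = ∫ t in a..x, gw t) :
    ∫ x in Ioo a b, (w x * gv x + v x * gw x) * w x = 1 / 2 * ∫ x in Ioo a b, w x ^ 2 * gv x := by
  have hvc := continuousOn_of_eq_primitive hab hgv hv
  have hwc := continuousOn_of_eq_primitive hab hgw hw
  have hwgw : IntervalIntegrable (fun x => 2 * (w x * gw x)) volume a b :=
    (hgw.continuousOn_mul hwc).const_mul 2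
  have hvanish : ∫ x in a..b, gv x * w x ^ 2 + v x * (2 * (w x * gw x)) = 0 := by
    have h := intervalIntegral.integral_mul_primitive_add_primitive_mul hgv hwgw
    rw [← hv b (right_mem_Icc.2 hab), hvb, zero_mul] at h
    rw [← h]
    refine intervalIntegral.integral_congr fun x hx => ?_
    rw [uIcc_of_le hab] at hx
    simp only [intervalIntegral.integral_const_mul, hv x hx,
      ← sq_eq_two_mul_integral_mul_of_eq_primitive hgw hw hx]
  simp only [← integral_Ioc_eq_integral_Ioo, ← intervalIntegral.integral_of_le hab]
  calc ∫ x in a..b, (w x * gv x + v x * gw x) * w x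
      = ∫ x in a..b, 1 / 2 * (w x ^ 2 * gv x)
          + 1 / 2 * (gv x * w x ^ 2 + v x * (2 * (w x * gw x))) := by
        congr 1 with x; ring
    _ = 1 / 2 * ∫ x in a..b, w x ^ 2 * gv x := by
        rw [intervalIntegral.integral_add, intervalIntegral.integral_const_mul,
          intervalIntegral.integral_const_mul, hvanish, mul_zero, add_zero]
        · exact (hgv.continuousOn_mul (hwc.pow 2)).const_mul _
        · exact ((hgv.mul_continuousOn (hwc.pow 2)).add (hwgw.continuousOn_mul hvc)).const_mul _

theorem abs_setIntegral_sq_mul_le (hab : a ≤ b) (hgv : MemLp gv 2 (volume.restrict (Ioo a b)))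
    (hgw : MemLp gw 2 (volume.restrict (Ioo a b))) (hw : ∀ x ∈ Icc a b, w x = ∫ t in a..x, gw t) :
    |∫ x in Ioo a b, w x ^ 2 * gv x| ≤
      √(2 * √(∫ x in Ioo a b, w x ^ 2) * √(∫ x in Ioo a b, gw x ^ 2)) *
        (√(∫ x in Ioo a b, w x ^ 2) * √(∫ x in Ioo a b, gv x ^ 2)) := by
  have igw := intervalIntegrable_of_memLp_Ioo hab hgw
  have hwc : ContinuousOn w (Icc a b) := by
    simpa [uIcc_of_le hab] using continuousOn_of_eq_primitive hab igw hw
  have hw2 : MemLp w 2 (volume.restrict (Ioo a b)) :=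
    (hwc.memLp_restrict_of_isCompact isCompact_Icc 2).mono_measure
      (Measure.restrict_mono Ioo_subset_Icc_self le_rfl)
  set M := √(2 * √(∫ x in Ioo a b, w x ^ 2) * √(∫ x in Ioo a b, gw x ^ 2))
  have hsup : ∀ x ∈ Ioo a b, |w x| ≤ M := fun x hx => by
    refine Real.abs_le_sqrt ?_
    calc w x ^ 2 ≤ 2 * ∫ t in Ioo a b, |w t * gw t| :=
          sq_le_two_mul_setIntegral_abs_mul_of_eq_primitive igw hw (Ioo_subset_Icc_self hx)
      _ ≤ _ := by
          rw [mul_assoc]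
          exact mul_le_mul_of_nonneg_left (integral_abs_mul_le_sqrt_mul_sqrt hw2 hgw) zero_le_two
  calc |∫ x in Ioo a b, w x ^ 2 * gv x| ≤ ∫ x in Ioo a b, |w x ^ 2 * gv x| :=
        abs_integral_le_integral_abs
    _ ≤ ∫ x in Ioo a b, M * |w x * gv x| := by
        refine integral_mono_of_nonneg (ae_of_all _ fun x => abs_nonneg _)
          ((hw2.integrable_mul hgv).abs.const_mul M) ?_
        refine (ae_restrict_iff' measurableSet_Ioo).2 (ae_of_all _ fun x hx => ?_)
        show |w x ^ 2 * gv x| ≤ M * |w x * gv x|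
        rw [sq, mul_assoc, abs_mul]
        exact mul_le_mul_of_nonneg_right (hsup x hx) (abs_nonneg _)
    _ ≤ M * (√(∫ x in Ioo a b, w x ^ 2) * √(∫ x in Ioo a b, gv x ^ 2)) := by
        rw [integral_const_mul]
        exact mul_le_mul_of_nonneg_left (integral_abs_mul_le_sqrt_mul_sqrt hw2 hgv)
          (Real.sqrt_nonneg _)

end Primitive

theorem young_interpolation_bound (c₀ ε k C u b P : ℝ) (hc₀ : 0 < c₀) (hε : 0 < ε)
    (hC : k ^ 4 ≤ 256 * c₀ ^ 3 * C) (hu : 0 ≤ u) (hb : 0 ≤ b) :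
    k / 2 * (√(2 * u * b) * (u * P)) ≤ ε * c₀ * P ^ 2 * u ^ 2 + C / ε ^ 2 * u ^ 2 + c₀ * b ^ 2 := by
  set M := √(2 * u * b)
  have hM2 : M ^ 2 = 2 * u * b := Real.sq_sqrt (by positivity)
  have h1 : k / 2 * (M * (u * P)) - ε * c₀ * P ^ 2 * u ^ 2 ≤ k ^ 2 * M ^ 2 / (16 * ε * c₀) := by
    rw [le_div_iff₀ (by positivity)]
    nlinarith [sq_nonneg (4 * ε * c₀ * u * P - k * M)]
  have h2 : k ^ 2 * M ^ 2 / (16 * ε * c₀) ≤ C / ε ^ 2 * u ^ 2 + c₀ * b ^ 2 := by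
    have hpoly : 2 * k ^ 2 * u * b * ε ≤ 16 * c₀ * (C * u ^ 2 + c₀ * b ^ 2 * ε ^ 2) := by
      refine le_of_mul_le_mul_left ?_ (by positivity : (0 : ℝ) < 16 * c₀ ^ 2)
      nlinarith [sq_nonneg (k ^ 2 * u - 16 * c₀ ^ 2 * b * ε),
        mul_le_mul_of_nonneg_right hC (sq_nonneg u)]
    rw [hM2, div_le_iff₀ (by positivity)]
    field_simp
    nlinarith [hpoly]
  linarith

/-- Monotonicity-type estimate for the derivative of the Burgers nonlinearity
`F(u) = c₁ u ∂u`: there is `C > 0` such that for all `ε > 0` and all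
`v, w ∈ W₀^{1,2}((0,1),ℝ)` with weak derivatives `g_v, g_w` one has
`c₁ ∫ (w g_v + v g_w) w ≤ ε c₀ ‖g_v‖² ‖w‖² + (C/ε²) ‖w‖² + c₀ ‖g_w‖²` (squared `L²`-norms). -/
theorem stmt12 (c₀ c₁ : ℝ) (hc₀ : 0 < c₀) :
    ∃ C : ℝ, 0 < C ∧ ∀ ε : ℝ, 0 < ε → ∀ v w gv gw : ℝ → ℝ,
      MemLp gv 2 (volume.restrict (Set.Ioo (0 : ℝ) 1)) →
      MemLp gw 2 (volume.restrict (Set.Ioo (0 : ℝ) 1)) →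
      (∀ x ∈ Set.Icc (0 : ℝ) 1, v x = ∫ t in (0 : ℝ)..x, gv t) → v 1 = 0 →
      (∀ x ∈ Set.Icc (0 : ℝ) 1, w x = ∫ t in (0 : ℝ)..x, gw t) → w 1 = 0 →
      c₁ * (∫ x in Set.Ioo (0 : ℝ) 1, (w x * gv x + v x * gw x) * w x)
        ≤ ε * c₀ * (∫ x in Set.Ioo (0 : ℝ) 1, gv x ^ 2) * (∫ x in Set.Ioo (0 : ℝ) 1, w x ^ 2)
          + C / ε ^ 2 * (∫ x in Set.Ioo (0 : ℝ) 1, w x ^ 2)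
          + c₀ * (∫ x in Set.Ioo (0 : ℝ) 1, gw x ^ 2) := by
  refine ⟨(c₁ ^ 4 + 1) / c₀ ^ 3, by positivity, fun ε hε v w gv gw hgv hgw hv hv1 hw _ => ?_⟩
  have hC : |c₁| ^ 4 ≤ 256 * c₀ ^ 3 * ((c₁ ^ 4 + 1) / c₀ ^ 3) := by
    rw [Even.pow_abs (by norm_num) c₁, mul_assoc, mul_div_cancel₀ _ (by positivity)]
    linarith [pow_nonneg (sq_nonneg c₁) 2]
  have hyoung := young_interpolation_bound c₀ ε |c₁| _ _ _ (√(∫ x in Ioo (0 : ℝ) 1, gv x ^ 2))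
    hc₀ hε hC (Real.sqrt_nonneg (∫ x in Ioo (0 : ℝ) 1, w x ^ 2))
    (Real.sqrt_nonneg (∫ x in Ioo (0 : ℝ) 1, gw x ^ 2))
  simp only [Real.sq_sqrt (integral_nonneg fun _ => sq_nonneg _)] at hyoung
  rw [setIntegral_burgers_eq_half_setIntegral_sq_mul zero_le_one
    (intervalIntegrable_of_memLp_Ioo zero_le_one hgv)
    (intervalIntegrable_of_memLp_Ioo zero_le_one hgw) hv hv1 hw]
  calc c₁ * (1 / 2 * ∫ x in Ioo 0 1, w x ^ 2 * gv x)
      ≤ |c₁| / 2 * |∫ x in Ioo 0 1, w x ^ 2 * gv x| := by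
        have h := le_abs_self (c₁ * ∫ x in Ioo 0 1, w x ^ 2 * gv x)
        rw [abs_mul] at h
        linarith
    _ ≤ _ := by gcongr; exact abs_setIntegral_sq_mul_le zero_le_one hgv hgw hw
    _ ≤ _ := hyoung
end

section
/- Let c_0 ∈ (0,∞), c_1 ∈ ℝ, α ∈ (3/4,∞), and let v ∈ W_0^{1,2}((0,1),ℝ) with weak derivative g ∈ L²((0,1),ℝ). Then ∑_{n=1}^∞ (c_0π²n²)^{−2α}·(∫_0^1 √2·sin(nπx)·c_1·v(x)·g(x) dx)² ≤ c_1²·c_0^{−2α}·(½·∑_{n=1}^∞ (πn)^{2−4α})·‖v‖_{L²((0,1))}⁴, and the right-hand side is finite. -/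
/-!
Weakly, `v * g = (v ^ 2 / 2)'`, so integrating by parts against `sin (c x)` (the boundary terms
vanish because `sin 0 = 0` and `v 1 = 0`) gives `∫ sin (c x) v g = -(c / 2) ∫ cos (c x) v ^ 2`,
whence `|∫ sin (c x) v g| ≤ |c| / 2 * ‖v‖²`, to be used with `c = n π`. The eigenvalue
weight `(c₀ (n π)²)^{-2α}` turns the factor `(n π)²` into `(n π)^{2 - 4α}`, summable for `α > 3/4`.
-/

open MeasureTheory Set intervalIntegral

theorem integral_mul_primitive_mul {φ g : ℝ → ℝ} {a b : ℝ}
    (hφ : AbsolutelyContinuousOnInterval φ a b) (hg : IntervalIntegrable g volume a b) :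
    ∫ x in a..b, φ x * ((∫ t in a..x, g t) * g x)
      = φ b * ((∫ t in a..b, g t) ^ 2 / 2)
        - ∫ x in a..b, deriv φ x * ((∫ t in a..x, g t) ^ 2 / 2) := by
  have hP := hg.absolutelyContinuousOnInterval_intervalIntegral left_mem_uIcc
  have hderiv : ∀ᵐ x, x ∈ uIoc a b →
      φ x * ((∫ t in a..x, g t) * g x) = φ x * deriv (fun y ↦ (∫ t in a..y, g t) ^ 2 / 2) x := by
    filter_upwards [hg.ae_hasDerivAt_integral] with x hx hxab
    rw [(((hx (uIoc_subset_uIcc hxab) a left_mem_uIcc).fun_pow 2).div_const 2).deriv]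
    ring
  have hP2 : AbsolutelyContinuousOnInterval (fun y ↦ (∫ t in a..y, g t) ^ 2 / 2) a b := by
    simpa [sq, div_eq_mul_inv, mul_comm] using (hP.fun_mul hP).const_mul (1 / 2)
  rw [integral_congr_ae hderiv, hφ.integral_mul_deriv_eq_deriv_mul hP2]
  simp

theorem abs_integral_mul_primitive_mul_le {φ g : ℝ → ℝ} {a b L : ℝ} (hab : a ≤ b)
    (hφ : AbsolutelyContinuousOnInterval φ a b) (hφ' : ∀ x, |deriv φ x| ≤ L)
    (hg : IntervalIntegrable g volume a b) (hb : ∫ t in a..b, g t = 0) :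
    |∫ x in a..b, φ x * ((∫ t in a..x, g t) * g x)|
      ≤ L / 2 * ∫ x in a..b, (∫ t in a..x, g t) ^ 2 := by
  have hP := (hg.absolutelyContinuousOnInterval_intervalIntegral left_mem_uIcc).continuousOn
  rw [integral_mul_primitive_mul hφ hg, hb, zero_pow two_ne_zero, zero_div, mul_zero, zero_sub,
    ← Real.norm_eq_abs, norm_neg, ← intervalIntegral.integral_const_mul]
  refine norm_integral_le_of_norm_le hab (.of_forall fun x _ ↦ ?_)
    ((hP.fun_pow 2).const_mul (L / 2)).intervalIntegrable
  rw [Real.norm_eq_abs, abs_mul, abs_of_nonneg (by positivity : (0 : ℝ) ≤ _ ^ 2 / 2)]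
  nlinarith [hφ' x, sq_nonneg (∫ t in a..x, g t)]

theorem abs_deriv_sin_const_mul_le (c x : ℝ) : |deriv (fun y ↦ Real.sin (c * y)) x| ≤ |c| := by
  rw [(((hasDerivAt_id' x).const_mul c).sin).deriv, abs_mul, mul_one]
  exact mul_le_of_le_one_left (abs_nonneg c) (Real.abs_cos_le_one _)

theorem abs_integral_sin_mul_mul_le {v g : ℝ → ℝ} {a b : ℝ} (hab : a ≤ b) (c : ℝ)
    (hg : IntervalIntegrable g volume a b) (hv : ∀ t ∈ Icc a b, v t = ∫ s in a..t, g s)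
    (hvb : v b = 0) :
    |∫ x in a..b, Real.sin (c * x) * (v x * g x)| ≤ |c| / 2 * ∫ x in a..b, v x ^ 2 := by
  have hvP : EqOn v (fun t ↦ ∫ s in a..t, g s) (uIcc a b) := by
    rw [uIcc_of_le hab]; exact hv
  have hsin : AbsolutelyContinuousOnInterval (fun y ↦ Real.sin (c * y)) a b :=
    (by fun_prop : ContDiff ℝ 1 (fun y ↦ Real.sin (c * y))).contDiffOn
      |>.absolutelyContinuousOnInterval
  convert abs_integral_mul_primitive_mul_le hab hsin (abs_deriv_sin_const_mul_le c) hg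
    (hv b ⟨hab, le_rfl⟩ ▸ hvb) using 2 <;>
  exact integral_congr fun x hx ↦ by simp only [hvP hx]

theorem summable_pnat_mul_rpow {a s : ℝ} (ha : 0 ≤ a) (hs : s < -1) :
    Summable fun n : ℕ+ ↦ (a * n) ^ s := by
  have hnat : Summable fun n : ℕ ↦ (a * n) ^ s := by
    simpa only [Real.mul_rpow ha (Nat.cast_nonneg _)] using
      (Real.summable_nat_rpow.mpr hs).mul_left (a ^ s)
  exact hnat.comp_injective PNat.coe_injective

theorem mul_sq_rpow_neg_two_mul_mul_sq {c x : ℝ} (hc : 0 ≤ c) (hx : 0 < x) (α : ℝ) :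
    (c * x ^ 2) ^ (-(2 * α)) * x ^ 2 = c ^ (-(2 * α)) * x ^ (2 - 4 * α) := by
  rw [Real.mul_rpow hc (sq_nonneg x), mul_assoc, ← Real.rpow_natCast x 2,
    ← Real.rpow_mul hx.le, ← Real.rpow_add hx]
  congr 2
  push_cast
  ring

theorem sq_integral_sqrt_two_sin_mul_le {v g : ℝ → ℝ} (c c₁ : ℝ)
    (hg : IntervalIntegrable g volume 0 1)
    (hv : ∀ t ∈ Icc (0 : ℝ) 1, v t = ∫ s in (0 : ℝ)..t, g s) (hv1 : v 1 = 0) :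
    (∫ x in (0 : ℝ)..1, Real.sqrt 2 * Real.sin (c * x) * (c₁ * v x * g x)) ^ 2
      ≤ c₁ ^ 2 / 2 * c ^ 2 * (∫ x in (0 : ℝ)..1, v x ^ 2) ^ 2 := by
  have hbound := abs_integral_sin_mul_mul_le zero_le_one c hg hv hv1
  have hsq := sq_le_sq' (neg_le_of_abs_le hbound) (le_of_abs_le hbound)
  calc (∫ x in (0 : ℝ)..1, Real.sqrt 2 * Real.sin (c * x) * (c₁ * v x * g x)) ^ 2
      = 2 * c₁ ^ 2 * (∫ x in (0 : ℝ)..1, Real.sin (c * x) * (v x * g x)) ^ 2 := by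
        have hfactor : ∫ x in (0 : ℝ)..1, Real.sqrt 2 * Real.sin (c * x) * (c₁ * v x * g x)
            = Real.sqrt 2 * c₁ * ∫ x in (0 : ℝ)..1, Real.sin (c * x) * (v x * g x) := by
          rw [← intervalIntegral.integral_const_mul]
          congr 1 with x
          ring
        rw [hfactor, mul_pow, mul_pow, Real.sq_sqrt zero_le_two]
    _ ≤ 2 * c₁ ^ 2 * (|c| / 2 * ∫ x in (0 : ℝ)..1, v x ^ 2) ^ 2 :=
        mul_le_mul_of_nonneg_left hsq (by positivity)
    _ = c₁ ^ 2 / 2 * c ^ 2 * (∫ x in (0 : ℝ)..1, v x ^ 2) ^ 2 := by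
        rw [mul_pow, div_pow, sq_abs]; ring

/-- Growth estimate in `H_{−α}`, `α > 3/4`, for the Burgers nonlinearity
`F(v) = c₁ · v · ∂v`, expressed through the Fourier sine coefficients:
`∑_n (c₀π²n²)^{−2α} ⟨e_n, F(v)⟩² ≤ c₁² c₀^{−2α} (½ ∑_n (πn)^{2−4α}) ‖v‖_{L²}⁴`,
the right-hand side being finite. -/
theorem stmt13 (c₀ c₁ : ℝ) (hc₀ : 0 < c₀) (α : ℝ) (hα : 3 / 4 < α)
    (v g : ℝ → ℝ)
    (hg : MemLp g 2 (volume.restrict (Set.Ioo (0 : ℝ) 1)))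
    (hv : ∀ t ∈ Set.Icc (0 : ℝ) 1, v t = ∫ s in (0 : ℝ)..t, g s)
    (hv1 : v 1 = 0) :
    Summable (fun n : ℕ+ => (Real.pi * (n : ℝ)) ^ ((2 : ℝ) - 4 * α)) ∧
    Summable (fun n : ℕ+ => (c₀ * Real.pi ^ 2 * (n : ℝ) ^ 2) ^ (-(2 * α)) *
      (∫ x in (0 : ℝ)..1, Real.sqrt 2 * Real.sin ((n : ℝ) * Real.pi * x) * (c₁ * v x * g x)) ^ 2) ∧
    (∑' n : ℕ+, (c₀ * Real.pi ^ 2 * (n : ℝ) ^ 2) ^ (-(2 * α)) *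
        (∫ x in (0 : ℝ)..1, Real.sqrt 2 * Real.sin ((n : ℝ) * Real.pi * x) * (c₁ * v x * g x)) ^ 2)
      ≤ c₁ ^ 2 * c₀ ^ (-(2 * α)) *
          (1 / 2 * ∑' n : ℕ+, (Real.pi * (n : ℝ)) ^ ((2 : ℝ) - 4 * α)) *
          (∫ x in (0 : ℝ)..1, v x ^ 2) ^ 2 := by
  have hgI : IntervalIntegrable g volume 0 1 :=
    (intervalIntegrable_iff_integrableOn_Ioo_of_le zero_le_one).2 (hg.integrable one_le_two)
  set K := c₁ ^ 2 * c₀ ^ (-(2 * α)) / 2 * (∫ x in (0 : ℝ)..1, v x ^ 2) ^ 2 with hK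
  have hsum := summable_pnat_mul_rpow Real.pi_pos.le (by linarith : (2 : ℝ) - 4 * α < -1)
  have hterm : ∀ n : ℕ+, (c₀ * Real.pi ^ 2 * (n : ℝ) ^ 2) ^ (-(2 * α)) *
      (∫ x in (0 : ℝ)..1, Real.sqrt 2 * Real.sin ((n : ℝ) * Real.pi * x) * (c₁ * v x * g x)) ^ 2
      ≤ K * (Real.pi * (n : ℝ)) ^ ((2 : ℝ) - 4 * α) := by
    intro n
    have hπn : 0 < Real.pi * n := by positivity
    have hweight := mul_sq_rpow_neg_two_mul_mul_sq hc₀.le hπn α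
    calc _ ≤ (c₀ * Real.pi ^ 2 * (n : ℝ) ^ 2) ^ (-(2 * α)) *
          (c₁ ^ 2 / 2 * (n * Real.pi) ^ 2 * (∫ x in (0 : ℝ)..1, v x ^ 2) ^ 2) := by
          gcongr
          exact sq_integral_sqrt_two_sin_mul_le _ c₁ hgI hv hv1
      _ = K * (Real.pi * (n : ℝ)) ^ ((2 : ℝ) - 4 * α) := by
          rw [hK, show c₀ * Real.pi ^ 2 * (n : ℝ) ^ 2 = c₀ * (Real.pi * n) ^ 2 by ring]
          linear_combination (c₁ ^ 2 / 2 * (∫ x in (0 : ℝ)..1, v x ^ 2) ^ 2) * hweight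
  have hT := Summable.of_nonneg_of_le (fun n ↦ by positivity) hterm (hsum.mul_left K)
  refine ⟨hsum, hT, (hT.tsum_le_tsum hterm (hsum.mul_left K)).trans_eq ?_⟩
  rw [tsum_mul_left]
  ring
end

section
/- Let (V,‖·‖_V) be an ℝ-Banach space, let (Ω,𝓕,ℙ) be a probability space, let α ∈ (0,∞), and let Z_n : Ω → V, n ∈ ℕ = {1,2,3,…}, be strongly measurable functions such that for every p ∈ [1,∞): sup_{n∈ℕ} (n^α · (E[‖Z_n‖_V^p])^{1/p}) < ∞. Then for every ε ∈ (0,∞) and every p ∈ [1,∞): ℙ(sup_{n∈ℕ} (n^{α−ε}·‖Z_n‖_V) < ∞) = 1 and E[(sup_{n∈ℕ} (n^{α−ε}·‖Z_n‖_V))^p] < ∞. -/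
open MeasureTheory
open scoped ENNReal

/-!
Choose `q ≥ p` with `ε q > 1`. The supremum `S = ⨆ n, n^(α-ε) ‖Z n‖` satisfies
`S^q ≤ ∑ n, (n^(α-ε) ‖Z n‖)^q`, and the `n`-th term has expectation at most `n^(-ε q) C_q^q`,
where `C_q = sup_n n^α ‖Z n‖_{L^q}`. This is summable, so `E[S^q] < ∞`; on a probability space
this gives `E[S^p] < ∞` and `S < ∞` almost surely.
-/

theorem ENNReal.iSup_rpow_le_tsum_rpow {ι : Type*} (a : ι → ℝ≥0∞) {q : ℝ} (hq : 0 < q) :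
    (⨆ i, a i) ^ q ≤ ∑' i, a i ^ q := by
  rw [← ENNReal.orderIsoRpow_apply q hq, OrderIso.map_iSup]
  exact iSup_le fun i => ENNReal.le_tsum i

theorem ENNReal.tsum_pnat_rpow_lt_top {s : ℝ} (hs : s < -1) :
    ∑' n : ℕ+, (n : ℝ≥0∞) ^ s < ∞ := by
  have hsum : Summable fun n : ℕ+ => ((n : ℕ) : ℝ) ^ s :=
    (Real.summable_nat_rpow.mpr hs).comp_injective PNat.coe_injective
  calc ∑' n : ℕ+, (n : ℝ≥0∞) ^ s = ENNReal.ofReal (∑' n : ℕ+, ((n : ℕ) : ℝ) ^ s) := by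
        rw [ENNReal.ofReal_tsum_of_nonneg (fun n => by positivity) hsum]
        refine tsum_congr fun n => ?_
        rw [← ENNReal.ofReal_rpow_of_pos (by positivity)]
        simp
    _ < ∞ := ENNReal.ofReal_lt_top

section
variable {Ω : Type*} [MeasurableSpace Ω] {μ : Measure Ω}

theorem lintegral_iSup_rpow_le_tsum_lintegral {ι : Type*} [Countable ι] {a : ι → Ω → ℝ≥0∞}
    (ha : ∀ i, AEMeasurable (a i) μ) {q : ℝ} (hq : 0 < q) :
    ∫⁻ ω, (⨆ i, a i ω) ^ q ∂μ ≤ ∑' i, ∫⁻ ω, a i ω ^ q ∂μ :=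
  calc ∫⁻ ω, (⨆ i, a i ω) ^ q ∂μ ≤ ∫⁻ ω, ∑' i, a i ω ^ q ∂μ :=
        lintegral_mono fun _ => ENNReal.iSup_rpow_le_tsum_rpow _ hq
    _ = ∑' i, ∫⁻ ω, a i ω ^ q ∂μ := lintegral_tsum fun i => (ha i).pow_const q

theorem lintegral_rpow_lt_top_of_exponent_le [IsFiniteMeasure μ] {f : Ω → ℝ≥0∞} {p q : ℝ}
    (hp : 0 ≤ p) (hpq : p ≤ q) (hf : ∫⁻ ω, f ω ^ q ∂μ < ∞) : ∫⁻ ω, f ω ^ p ∂μ < ∞ := by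
  have hle : ∀ ω, f ω ^ p ≤ 1 + f ω ^ q := fun ω => by
    rcases le_or_gt (f ω) 1 with h | h
    · exact (ENNReal.rpow_le_one h hp).trans le_self_add
    · exact (ENNReal.rpow_le_rpow_of_exponent_le h.le hpq).trans le_add_self
  calc ∫⁻ ω, f ω ^ p ∂μ ≤ ∫⁻ ω, 1 + f ω ^ q ∂μ := lintegral_mono hle
    _ = μ Set.univ + ∫⁻ ω, f ω ^ q ∂μ := by rw [lintegral_add_left measurable_const, lintegral_one]
    _ < ∞ := ENNReal.add_lt_top.mpr ⟨measure_lt_top μ _, hf⟩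

theorem lintegral_rpow_const_mul_enorm {E : Type*} [NormedAddCommGroup E] (f : Ω → E)
    {c : ℝ≥0∞} (hc : c ≠ ∞) {q : ℝ} (hq : 0 < q) :
    ∫⁻ ω, (c * ‖f ω‖ₑ) ^ q ∂μ = (c * eLpNorm f (ENNReal.ofReal q) μ) ^ q := by
  simp_rw [ENNReal.mul_rpow_of_nonneg _ _ hq.le]
  rw [lintegral_const_mul' _ _ (ENNReal.rpow_ne_top_of_nonneg hq.le hc),
    lintegral_rpow_enorm_eq_rpow_eLpNorm' hq, eLpNorm_eq_eLpNorm' (by simpa using hq) (by simp),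
    ENNReal.toReal_ofReal hq.le]

theorem prob_lt_top_of_lintegral_rpow_lt_top [IsProbabilityMeasure μ] {f : Ω → ℝ≥0∞}
    (hf : Measurable f) {p : ℝ} (hp : 0 < p) (h : ∫⁻ ω, f ω ^ p ∂μ < ∞) :
    μ {ω | f ω < ∞} = 1 := by
  rw [← mem_ae_iff_prob_eq_one (measurableSet_lt hf measurable_const)]
  filter_upwards [ae_lt_top (hf.pow_const p) h.ne] with ω hω
  exact (ENNReal.rpow_lt_top_iff_of_pos hp).mp hω

theorem ENNReal.ofReal_rpow_mul_norm {E : Type*} [NormedAddCommGroup E] {r : ℝ} (hr : 0 < r)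
    (s : ℝ) (x : E) : ENNReal.ofReal (r ^ s * ‖x‖) = ENNReal.ofReal r ^ s * ‖x‖ₑ := by
  rw [ENNReal.ofReal_mul (by positivity), ofReal_norm, ENNReal.ofReal_rpow_of_pos hr]

section WeightedSupremum
variable {E : Type*} [NormedAddCommGroup E] (Z : ℕ+ → Ω → E) (α ε : ℝ)

theorem lintegral_weighted_rpow_le {q : ℝ} (hq : 0 < q) (n : ℕ+) :
    ∫⁻ ω, ENNReal.ofReal ((n : ℝ) ^ (α - ε) * ‖Z n ω‖) ^ q ∂μ ≤
      (n : ℝ≥0∞) ^ (-(ε * q)) *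
        (⨆ m : ℕ+, (m : ℝ≥0∞) ^ α * eLpNorm (Z m) (ENNReal.ofReal q) μ) ^ q := by
  have hn0 : (n : ℝ≥0∞) ≠ 0 := by simp
  have hntop : (n : ℝ≥0∞) ≠ ∞ := by simp
  have hsplit : (n : ℝ≥0∞) ^ (α - ε) = (n : ℝ≥0∞) ^ (-ε) * (n : ℝ≥0∞) ^ α := by
    rw [← ENNReal.rpow_add _ _ hn0 hntop, neg_add_eq_sub]
  have hbound : (n : ℝ≥0∞) ^ (α - ε) * eLpNorm (Z n) (ENNReal.ofReal q) μ ≤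
      (n : ℝ≥0∞) ^ (-ε) * ⨆ m : ℕ+, (m : ℝ≥0∞) ^ α * eLpNorm (Z m) (ENNReal.ofReal q) μ := by
    rw [hsplit, mul_assoc]
    exact mul_le_mul_right (le_iSup (fun m : ℕ+ => (m : ℝ≥0∞) ^ α * _) n) _
  calc ∫⁻ ω, ENNReal.ofReal ((n : ℝ) ^ (α - ε) * ‖Z n ω‖) ^ q ∂μ
      = ((n : ℝ≥0∞) ^ (α - ε) * eLpNorm (Z n) (ENNReal.ofReal q) μ) ^ q := by
        have hn : (0 : ℝ) < n := by positivity
        simp_rw [ENNReal.ofReal_rpow_mul_norm hn, ENNReal.ofReal_natCast]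
        exact lintegral_rpow_const_mul_enorm _ (ENNReal.rpow_ne_top_of_ne_zero hn0 hntop) hq
    _ ≤ _ := ENNReal.rpow_le_rpow hbound hq.le
    _ = _ := by rw [ENNReal.mul_rpow_of_nonneg _ _ hq.le, ← ENNReal.rpow_mul, neg_mul]

theorem lintegral_iSup_weighted_rpow_lt_top (hZ : ∀ n, AEStronglyMeasurable (Z n) μ) {q : ℝ}
    (hq : 0 < q) (hεq : 1 < ε * q)
    (hC : ⨆ n : ℕ+, (n : ℝ≥0∞) ^ α * eLpNorm (Z n) (ENNReal.ofReal q) μ < ∞) :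
    ∫⁻ ω, (⨆ n : ℕ+, ENNReal.ofReal ((n : ℝ) ^ (α - ε) * ‖Z n ω‖)) ^ q ∂μ < ∞ :=
  calc _ ≤ ∑' n : ℕ+, ∫⁻ ω, ENNReal.ofReal ((n : ℝ) ^ (α - ε) * ‖Z n ω‖) ^ q ∂μ :=
        lintegral_iSup_rpow_le_tsum_lintegral
          (fun n => (aemeasurable_const.mul (hZ n).norm.aemeasurable).ennreal_ofReal) hq
    _ ≤ ∑' n : ℕ+, (n : ℝ≥0∞) ^ (-(ε * q)) *
          (⨆ m : ℕ+, (m : ℝ≥0∞) ^ α * eLpNorm (Z m) (ENNReal.ofReal q) μ) ^ q :=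
        ENNReal.tsum_le_tsum fun n => lintegral_weighted_rpow_le Z α ε hq n
    _ < ∞ := by
        rw [ENNReal.tsum_mul_right]
        exact ENNReal.mul_lt_top (ENNReal.tsum_pnat_rpow_lt_top (by linarith))
          (ENNReal.rpow_lt_top_of_nonneg hq.le hC.ne)

end WeightedSupremum

end

theorem stmt19_general {V : Type*} [NormedAddCommGroup V]
    {Ω : Type*} [MeasurableSpace Ω] (ℙ : Measure Ω) [IsProbabilityMeasure ℙ]
    (α : ℝ) (Z : ℕ+ → Ω → V)
    (hZmeas : ∀ n : ℕ+, StronglyMeasurable (Z n))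
    (hZ : ∀ p : ℝ, 1 ≤ p →
      (⨆ n : ℕ+, ((n : ℝ≥0∞) ^ (α : ℝ)) * eLpNorm (Z n) (ENNReal.ofReal p) ℙ) < ⊤) :
    ∀ ε : ℝ, 0 < ε → ∀ p : ℝ, 1 ≤ p →
      ℙ {ω | (⨆ n : ℕ+, ENNReal.ofReal ((n : ℝ) ^ (α - ε) * ‖Z n ω‖)) < ⊤} = 1 ∧
      (∫⁻ ω, (⨆ n : ℕ+, ENNReal.ofReal ((n : ℝ) ^ (α - ε) * ‖Z n ω‖)) ^ p ∂ℙ) < ⊤ := by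
  intro ε hε p hp
  set q := max p (2 / ε)
  have hpq : p ≤ q := le_max_left _ _
  have hεq : 1 < ε * q := calc
    1 < ε * (2 / ε) := by rw [mul_div_cancel₀ _ hε.ne']; norm_num
    _ ≤ ε * q := by gcongr; exact le_max_right _ _
  have hmoment_q := lintegral_iSup_weighted_rpow_lt_top Z α ε
    (fun n => (hZmeas n).aestronglyMeasurable) (by linarith) hεq (hZ q (hp.trans hpq))
  have hmoment_p := lintegral_rpow_lt_top_of_exponent_le (by linarith) hpq hmoment_q
  have hmeas : Measurable fun ω => ⨆ n : ℕ+, ENNReal.ofReal ((n : ℝ) ^ (α - ε) * ‖Z n ω‖) :=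
    .iSup fun n => (measurable_const.mul (hZmeas n).norm.measurable).ennreal_ofReal
  exact ⟨prob_lt_top_of_lintegral_rpow_lt_top hmeas (by linarith) hmoment_p, hmoment_p⟩

/-- If `Z_n : Ω → V` are strongly measurable into a real Banach space and for
every `p ∈ [1,∞)` one has `sup_n n^α ‖Z_n‖_{L^p} < ∞`, then for every `ε > 0` and `p ∈ [1,∞)`
the random variable `sup_n n^{α−ε} ‖Z_n‖` is almost surely finite and has finite `p`-th moment. -/
theorem stmt19 {V : Type*} [NormedAddCommGroup V] [NormedSpace ℝ V] [CompleteSpace V]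
    {Ω : Type*} [MeasurableSpace Ω] (ℙ : Measure Ω) [IsProbabilityMeasure ℙ]
    (α : ℝ) (hα : 0 < α) (Z : ℕ+ → Ω → V)
    (hZmeas : ∀ n : ℕ+, StronglyMeasurable (Z n))
    (hZ : ∀ p : ℝ, 1 ≤ p →
      (⨆ n : ℕ+, ((n : ℝ≥0∞) ^ (α : ℝ)) * eLpNorm (Z n) (ENNReal.ofReal p) ℙ) < ⊤) :
    ∀ ε : ℝ, 0 < ε → ∀ p : ℝ, 1 ≤ p →
      ℙ {ω | (⨆ n : ℕ+, ENNReal.ofReal ((n : ℝ) ^ (α - ε) * ‖Z n ω‖)) < ⊤} = 1 ∧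
      (∫⁻ ω, (⨆ n : ℕ+, ENNReal.ofReal ((n : ℝ) ^ (α - ε) * ‖Z n ω‖)) ^ p ∂ℙ) < ⊤ :=
  stmt19_general ℙ α Z hZmeas hZ
end
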